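/- arXiv:1604.04157 — 11 statements merged into one kernel-verified Lean document; each statement's English description precedes it below -/
import Mathlib

section
/- If p' and p'' are both market clearing price vectors for a matching market, then the componentwise minimum p defined by p_i = min(p'_i, p''_i) is also market clearing. -/
open Finset

noncomputable section

/-- Profit of buyer `j` at prices `p`: `max_i (v i j - p i)`. -/
def profit {n : ℕ} (v : Fin n → Fin n → ℝ) (p : Fin n → ℝ) (j : Fin n) : ℝ :=
  ⨆ i, v i j - p i

/-- Value of a perfect matching, where buyer `j` is assigned item `M j`. -/
def mval {n : ℕ} (v : Fin n → Fin n → ℝ) (M : Fin n ≃ Fin n) : ℝ :=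
  ∑ j, v (M j) j

/-- Maximum value of a perfect matching. -/
def vstar {n : ℕ} (v : Fin n → Fin n → ℝ) : ℝ :=
  ⨆ M : Fin n ≃ Fin n, mval v M

/-- `M` witnesses that `p` is market clearing: every buyer gets a profit-maximizing item. -/
def ClearingWitness {n : ℕ} (v : Fin n → Fin n → ℝ) (p : Fin n → ℝ) (M : Fin n ≃ Fin n) : Prop :=
  ∀ j i', v i' j - p i' ≤ v (M j) j - p (M j)

/-- `p` is market clearing: some perfect matching assigns every buyer an item
maximizing her profit `v i j - p i`. -/
def IsMC {n : ℕ} (v : Fin n → Fin n → ℝ) (p : Fin n → ℝ) : Prop :=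
  ∃ M : Fin n ≃ Fin n, ClearingWitness v p M

/-- Buyer-optimal market clearing prices: nonnegative, market clearing, and of
minimum total price among all nonnegative market clearing price vectors. -/
def BuyerOptimal {n : ℕ} (v : Fin n → Fin n → ℝ) (p : Fin n → ℝ) : Prop :=
  (∀ i, 0 ≤ p i) ∧ IsMC v p ∧
    ∀ p' : Fin n → ℝ, (∀ i, 0 ≤ p' i) → IsMC v p' → ∑ i, p i ≤ ∑ i, p' i

/-- `v*_{-j}`: maximum matching value when buyer `j` is replaced by a dummy
buyer with zero valuations. -/
def vstarDummy {n : ℕ} (v : Fin n → Fin n → ℝ) (j : Fin n) : ℝ :=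
  ⨆ M : Fin n ≃ Fin n, ∑ j' ∈ Finset.univ.erase j, v (M j') j'

/-- `v*_{-j}^{-i}`: maximum value of a perfect matching between `I \ {i}` and `J \ {j}`. -/
def vstarRemove {n : ℕ} (v : Fin n → Fin n → ℝ) (i j : Fin n) : ℝ :=
  ⨆ M : {i' : Fin n // i' ≠ i} ≃ {j' : Fin n // j' ≠ j},
    ∑ j' : {j' : Fin n // j' ≠ j}, v (M.symm j') j'

/-- Buyer `j` is joined, by an `M`-alternating path in the equality graph starting and
ending with a matching edge (`j = j_0, i_0 = M j_0, j_1, i_1 = M j_1, …, i_k = M j_k`),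
to an item of price zero. -/
def AltPathZero {n : ℕ} (v : Fin n → Fin n → ℝ) (p : Fin n → ℝ) (M : Fin n ≃ Fin n)
    (j : Fin n) : Prop :=
  ∃ k : ℕ, ∃ js : Fin (k + 1) → Fin n,
    js 0 = j ∧
    (∀ t : Fin k,
      p (M (js t.castSucc)) + profit v p (js t.succ) = v (M (js t.castSucc)) (js t.succ)) ∧
    p (M (js (Fin.last k))) = 0

/-- A (partial) matching given as a set of item-buyer pairs: pairwise non-incident edges. -/
def IsMatching {n : ℕ} (Mset : Finset (Fin n × Fin n)) : Prop :=
  ∀ e ∈ Mset, ∀ e' ∈ Mset, e ≠ e' → e.1 ≠ e'.1 ∧ e.2 ≠ e'.2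

/-- All edges of `Mset` are equality edges w.r.t. the dual solution `(p, q)`. -/
def InEqualityGraph {n : ℕ} (v : Fin n → Fin n → ℝ) (p q : Fin n → ℝ)
    (Mset : Finset (Fin n × Fin n)) : Prop :=
  ∀ e ∈ Mset, p e.1 + q e.2 = v e.1 e.2

/-- Item `i` is reachable from buyer `j` along an `Mset`-alternating path of equality
edges: `j = j_0, i_0, j_1, i_1, …, i_k = i`, where each `(i_t, j_t)` is a non-matching
equality edge and each `(i_t, j_{t+1})` is a matching edge. -/
def ReachFrom {n : ℕ} (v : Fin n → Fin n → ℝ) (p q : Fin n → ℝ)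
    (Mset : Finset (Fin n × Fin n)) (j i : Fin n) : Prop :=
  ∃ k : ℕ, ∃ is js : Fin (k + 1) → Fin n,
    js 0 = j ∧ is (Fin.last k) = i ∧
    (∀ t, p (is t) + q (js t) = v (is t) (js t) ∧ (is t, js t) ∉ Mset) ∧
    (∀ t : Fin k, (is t.castSucc, js t.succ) ∈ Mset)

/-- the componentwise minimum of two market clearing price vectors
is market clearing. -/
theorem stmt_0 (n : ℕ) (v : Fin n → Fin n → ℝ) (hv : ∀ i j, 0 ≤ v i j)
    (p' p'' : Fin n → ℝ) (hp' : ∀ i, 0 ≤ p' i) (hp'' : ∀ i, 0 ≤ p'' i)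
    (h' : IsMC v p') (h'' : IsMC v p'') :
    IsMC v (fun i => min (p' i) (p'' i)) := by
  rcases h' with ⟨M', hM'⟩
  rcases h'' with ⟨M'', hM''⟩
  rcases Nat.eq_zero_or_pos n with h0 | hn
  · subst h0; exact ⟨Equiv.refl _, fun j => j.elim0⟩
  have hne : Nonempty (Fin n) := ⟨⟨0, hn⟩⟩
  set p : Fin n → ℝ := fun i => min (p' i) (p'' i) with hpdef
  have bdd : ∀ (w : Fin n → ℝ) j, BddAbove (Set.range fun i => v i j - w i) :=
    fun w j => Set.Finite.bddAbove (Set.finite_range _)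
  have hle : ∀ (w : Fin n → ℝ) i j, v i j - w i ≤ profit v w j :=
    fun w i j => le_ciSup (bdd w j) i
  have he' : ∀ j, v (M' j) j - p' (M' j) = profit v p' j := fun j =>
    le_antisymm (hle p' _ j) (ciSup_le (fun i => hM' j i))
  have he'' : ∀ j, v (M'' j) j - p'' (M'' j) = profit v p'' j := fun j =>
    le_antisymm (hle p'' _ j) (ciSup_le (fun i => hM'' j i))
  -- the profit at p equals the max of the two profits
  have hprof : ∀ j, profit v p j ≤ max (profit v p' j) (profit v p'' j) := by
    intro j
    apply ciSup_le
    intro i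
    rcases le_total (p' i) (p'' i) with h | h
    · have : p i = p' i := min_eq_left h
      rw [this]
      exact le_max_of_le_left (hle p' i j)
    · have : p i = p'' i := min_eq_right h
      rw [this]
      exact le_max_of_le_right (hle p'' i j)
  -- candidate assignment
  set f : Fin n → Fin n := fun j => if profit v p'' j ≤ profit v p' j then M' j else M'' j
    with hfdef
  have hkey : ∀ j, max (profit v p' j) (profit v p'' j) ≤ v (f j) j - p (f j) := by
    intro j
    by_cases h : profit v p'' j ≤ profit v p' j
    · have hf : f j = M' j := if_pos h
      rw [hf, max_eq_left h]
      calc profit v p' j = v (M' j) j - p' (M' j) := (he' j).symm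
        _ ≤ v (M' j) j - p (M' j) := by
            have := min_le_left (p' (M' j)) (p'' (M' j)); simp only [p]; linarith
    · have hf : f j = M'' j := if_neg h
      rw [hf, max_eq_right (le_of_not_ge h)]
      calc profit v p'' j = v (M'' j) j - p'' (M'' j) := (he'' j).symm
        _ ≤ v (M'' j) j - p (M'' j) := by
            have := min_le_right (p' (M'' j)) (p'' (M'' j)); simp only [p]; linarith
  -- f is injective
  have hinj : Function.Injective f := by
    intro j1 j2 heq
    by_contra hjj
    by_cases h1 : profit v p'' j1 ≤ profit v p' j1 <;>
      by_cases h2 : profit v p'' j2 ≤ profit v p' j2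
    · rw [hfdef] at heq; simp only [if_pos h1, if_pos h2] at heq
      exact hjj (M'.injective heq)
    · -- mixed: j1 uses M', j2 uses M''
      rw [hfdef] at heq; simp only [if_pos h1, if_neg h2] at heq
      set i := M' j1 with hi
      have hi2 : M'' j2 = i := heq.symm
      have e1 : v i j1 - p' i = profit v p' j1 := he' j1
      have e2 : v i j2 - p'' i = profit v p'' j2 := by rw [← hi2]; exact he'' j2
      have e3 : v i j1 - p'' i ≤ profit v p'' j1 := hle p'' i j1
      have e4 : v i j2 - p' i ≤ profit v p' j2 := hle p' i j2
      have h2' : profit v p' j2 < profit v p'' j2 := lt_of_not_ge h2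
      linarith
    · rw [hfdef] at heq; simp only [if_neg h1, if_pos h2] at heq
      set i := M'' j1 with hi
      have hi2 : M' j2 = i := heq.symm
      have e1 : v i j1 - p'' i = profit v p'' j1 := he'' j1
      have e2 : v i j2 - p' i = profit v p' j2 := by rw [← hi2]; exact he' j2
      have e3 : v i j1 - p' i ≤ profit v p' j1 := hle p' i j1
      have e4 : v i j2 - p'' i ≤ profit v p'' j2 := hle p'' i j2
      have h1' : profit v p' j1 < profit v p'' j1 := lt_of_not_ge h1
      linarith
    · rw [hfdef] at heq; simp only [if_neg h1, if_neg h2] at heq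
      exact hjj (M''.injective heq)
  refine ⟨Equiv.ofBijective f (Finite.injective_iff_bijective.mp hinj), ?_⟩
  intro j i'
  have h1 : v i' j - p i' ≤ profit v p j := hle p i' j
  have h2 : profit v p j ≤ v (f j) j - p (f j) := (hprof j).trans (hkey j)
  exact h1.trans h2

end
end

section
/- If p' and p'' are market clearing price vectors with corresponding buyer profit vectors q'(j) = max_i (v(i,j) - p'_i) and q''(j) = max_i (v(i,j) - p''_i), then p_i := min(p'_i, p''_i) together with q_j := max(q'_j, q''_j) is a feasible dual solution of the assignment LP, i.e., p_i + q_j ≥ v(i,j) for all i, j. -/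
open Finset

noncomputable section

/-- componentwise min of prices together with componentwise max of
profits is a feasible dual solution of the assignment LP. -/
theorem stmt_1 (n : ℕ) (v : Fin n → Fin n → ℝ) (hv : ∀ i j, 0 ≤ v i j)
    (p' p'' : Fin n → ℝ) (hp' : ∀ i, 0 ≤ p' i) (hp'' : ∀ i, 0 ≤ p'' i)
    (h' : IsMC v p') (h'' : IsMC v p'') :
    ∀ i j, v i j ≤ min (p' i) (p'' i) + max (profit v p' j) (profit v p'' j) := by
  intro i j
  have key : ∀ p : Fin n → ℝ, v i j ≤ p i + profit v p j := by
    intro p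
    have : v i j - p i ≤ profit v p j :=
      le_ciSup (f := fun i' => v i' j - p i') (Set.Finite.bddAbove (Set.finite_range _)) i
    linarith
  rcases min_cases (p' i) (p'' i) with ⟨h, _⟩ | ⟨h, _⟩ <;> rw [h]
  · exact (key p').trans (by gcongr; exact le_max_left _ _)
  · exact (key p'').trans (by gcongr; exact le_max_right _ _)

end
end

section
/- Any maximum-value perfect matching M satisfies complementary slackness with any market clearing price vector p: for every edge (i,j) ∈ M, p_i + q_j = v(i,j), where q_j = max_{i'} (v(i',j) - p_{i'}). -/
open Finset

noncomputable section

/-- any maximum-value perfect matching satisfies complementary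
slackness with any market clearing price vector. -/
theorem stmt_2 (n : ℕ) (v : Fin n → Fin n → ℝ) (hv : ∀ i j, 0 ≤ v i j)
    (p : Fin n → ℝ) (hp : ∀ i, 0 ≤ p i) (hMC : IsMC v p)
    (M : Fin n ≃ Fin n) (hM : ∀ M' : Fin n ≃ Fin n, mval v M' ≤ mval v M) :
    ∀ j, p (M j) + profit v p j = v (M j) j := by
  obtain ⟨M', hW⟩ := hMC
  have hprof : ∀ j, profit v p j = v (M' j) j - p (M' j) := by
    intro j
    haveI : Nonempty (Fin n) := ⟨j⟩
    refine le_antisymm (ciSup_le fun i => hW j i) ?_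
    exact le_ciSup (f := fun i => v i j - p i)
      (Set.Finite.bddAbove (Set.finite_range _)) (M' j)
  have hge : ∀ j, v (M j) j - p (M j) ≤ profit v p j := fun j =>
    le_ciSup (f := fun i => v i j - p i)
      (Set.Finite.bddAbove (Set.finite_range _)) (M j)
  have hsum : ∑ j, (p (M j) + profit v p j - v (M j) j) = mval v M' - mval v M := by
    have h1 : ∑ j, p (M j) = ∑ i, p i := Equiv.sum_comp M p
    have h2 : ∑ j, p (M' j) = ∑ i, p i := Equiv.sum_comp M' p
    simp only [hprof, mval]
    rw [Finset.sum_sub_distrib]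
    have h3 : ∑ x, (p (M x) + (v (M' x) x - p (M' x))) = ∑ x, v (M' x) x := by
      simp only [Finset.sum_add_distrib, Finset.sum_sub_distrib, h1, h2]; ring
    rw [h3]
  have hle : ∑ j, (p (M j) + profit v p j - v (M j) j) ≤ 0 := by
    rw [hsum]; linarith [hM M']
  have hnn : ∀ j ∈ Finset.univ, 0 ≤ p (M j) + profit v p j - v (M j) j := by
    intro j _; linarith [hge j]
  have hzero : ∑ j, (p (M j) + profit v p j - v (M j) j) = 0 :=
    le_antisymm hle (Finset.sum_nonneg hnn)
  intro j
  have := (Finset.sum_eq_zero_iff_of_nonneg hnn).mp hzero j (Finset.mem_univ j)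
  linarith

end
end

section
/- If p is a market clearing price vector with associated profits q_j = max_i (v(i,j) - p_i), then Σ_i p_i + Σ_j q_j = v*, the maximum value of a perfect matching; in particular the matching witnessing market clearing is a maximum-value matching. -/
open Finset

noncomputable section

lemma profit_eq {n : ℕ} (v : Fin n → Fin n → ℝ) (p : Fin n → ℝ) (M : Fin n ≃ Fin n)
    (hM : ClearingWitness v p M) (j : Fin n) :
    profit v p j = v (M j) j - p (M j) := by
  have : Nonempty (Fin n) := ⟨j⟩
  refine le_antisymm (ciSup_le fun i => hM j i) ?_
  exact le_ciSup (Set.finite_range fun i => v i j - p i).bddAbove (M j)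

lemma vstar_eq {n : ℕ} (v : Fin n → Fin n → ℝ) (p : Fin n → ℝ) (M : Fin n ≃ Fin n)
    (hM : ClearingWitness v p M) : vstar v = mval v M := by
  refine le_antisymm (ciSup_le fun M' => ?_) (le_ciSup (Set.finite_range _).bddAbove M)
  have h1 : ∀ j, v (M' j) j ≤ v (M j) j - p (M j) + p (M' j) := fun j => by
    have := hM j (M' j); linarith
  calc mval v M' ≤ ∑ j, (v (M j) j - p (M j) + p (M' j)) := Finset.sum_le_sum fun j _ => h1 j
    _ = ∑ j, (v (M j) j - p (M j)) + ∑ j, p (M' j) := Finset.sum_add_distrib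
    _ = ∑ j, (v (M j) j - p (M j)) + ∑ j, p (M j) := by
        rw [Equiv.sum_comp M' p, Equiv.sum_comp M p]
    _ = mval v M := by rw [← Finset.sum_add_distrib]; simp [mval]

/-- for market clearing `p`, `Σ p + Σ q = v*`; in particular any
matching witnessing market clearing is a maximum-value matching. -/
theorem stmt_3 (n : ℕ) (v : Fin n → Fin n → ℝ) (hv : ∀ i j, 0 ≤ v i j)
    (p : Fin n → ℝ) (hp : ∀ i, 0 ≤ p i) (hMC : IsMC v p) :
    ((∑ i, p i) + (∑ j, profit v p j) = vstar v) ∧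
      ∀ M : Fin n ≃ Fin n, ClearingWitness v p M → mval v M = vstar v := by
  obtain ⟨M, hM⟩ := hMC
  have key : ∀ M' : Fin n ≃ Fin n, ClearingWitness v p M' → mval v M' = vstar v :=
    fun M' hM' => (vstar_eq v p M' hM').symm
  refine ⟨?_, key⟩
  rw [← key M hM]
  calc (∑ i, p i) + ∑ j, profit v p j
      = (∑ j, p (M j)) + ∑ j, (v (M j) j - p (M j)) := by
        rw [Equiv.sum_comp M p]
        congr 1
        exact Finset.sum_congr rfl fun j _ => profit_eq v p M hM j
    _ = ∑ j, v (M j) j := by rw [← Finset.sum_add_distrib]; ring_nf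
    _ = mval v M := rfl

end
end

section
/- There exists a unique buyer-optimal market clearing price vector: among all nonnegative market clearing price vectors there is exactly one minimizing Σ_i p_i, and it is the componentwise minimum of all nonnegative market clearing price vectors. -/
open Finset

noncomputable section

namespace Stmt5Aux

def F {n : ℕ} (v : Fin n → Fin n → ℝ) (p : Fin n → ℝ) : ℝ :=
  ∑ i, p i + ∑ j, profit v p j

variable {n : ℕ} [NeZero n] (v : Fin n → Fin n → ℝ)
set_option linter.unusedSectionVars false

lemma le_profit (p : Fin n → ℝ) (j i : Fin n) : v i j - p i ≤ profit v p j :=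
  le_ciSup (f := fun i => v i j - p i) (Set.Finite.bddAbove (Set.finite_range _)) i

lemma profit_le {p : Fin n → ℝ} {j : Fin n} {a : ℝ} (h : ∀ i, v i j - p i ≤ a) :
    profit v p j ≤ a := ciSup_le h

lemma profit_exists (p : Fin n → ℝ) (j : Fin n) : ∃ i, profit v p j = v i j - p i := by
  obtain ⟨i0, hi0⟩ := Finite.exists_max (fun i => v i j - p i)
  exact ⟨i0, le_antisymm (profit_le v hi0) (le_profit v p j i0)⟩

lemma continuous_profit (j : Fin n) : Continuous (fun p : Fin n → ℝ => profit v p j) := by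
  have key : ∀ (s : Finset (Fin n)) (hs : s.Nonempty),
      Continuous (fun p : Fin n → ℝ => s.sup' hs (fun i => v i j - p i)) := by
    intro s hs
    induction hs using Finset.Nonempty.cons_induction with
    | singleton a =>
      simp only [Finset.sup'_singleton]
      exact continuous_const.sub (continuous_apply a)
    | cons a s ha hs ih =>
      have he : (fun p : Fin n → ℝ => (Finset.cons a s ha).sup' (Finset.cons_nonempty ha)
          (fun i => v i j - p i))
          = fun p => max (v a j - p a) (s.sup' hs (fun i => v i j - p i)) := by
        funext p
        rw [Finset.sup'_cons (H := hs)]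
      rw [he]
      exact (continuous_const.sub (continuous_apply a)).max ih
  have h : (fun p : Fin n → ℝ => profit v p j)
      = fun p => univ.sup' univ_nonempty (fun i => v i j - p i) := by
    funext p
    rw [Finset.sup'_univ_eq_ciSup]
    rfl
  rw [h]; exact key univ univ_nonempty

lemma continuous_F : Continuous (F v) := by
  unfold F
  exact (continuous_finset_sum _ fun i _ => continuous_apply i).add
    (continuous_finset_sum _ fun j _ => continuous_profit v j)

lemma profit_sub_const (p : Fin n → ℝ) (t : ℝ) (j : Fin n) :
    profit v (fun i => p i - t) j = profit v p j + t := by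
  refine le_antisymm (profit_le v fun i => ?_) ?_
  · have := le_profit v p j i; linarith
  · have h : ∀ i, v i j - p i ≤ profit v (fun i => p i - t) j - t := by
      intro i
      have := le_profit v (fun i => p i - t) j i
      linarith
    have := profit_le v h
    linarith

lemma mval_le_F (p : Fin n → ℝ) (M : Fin n ≃ Fin n) : (∑ j, v (M j) j) ≤ F v p := by
  have h : ∀ j, v (M j) j ≤ profit v p j + p (M j) := fun j => by
    have := le_profit v p j (M j); linarith
  calc (∑ j, v (M j) j) ≤ ∑ j, (profit v p j + p (M j)) :=
        Finset.sum_le_sum fun j _ => h j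
    _ = ∑ j, profit v p j + ∑ j, p (M j) := Finset.sum_add_distrib
    _ = F v p := by rw [M.sum_comp p]; unfold F; ring

lemma F_eq_of_witness {p : Fin n → ℝ} {M : Fin n ≃ Fin n}
    (h : ∀ j i', v i' j - p i' ≤ v (M j) j - p (M j)) : F v p = ∑ j, v (M j) j := by
  have hp : ∀ j, profit v p j = v (M j) j - p (M j) := fun j =>
    le_antisymm (profit_le v (h j)) (le_profit v p j (M j))
  have h1 : ∑ j, profit v p j = ∑ j, v (M j) j - ∑ j, p (M j) := by
    rw [← Finset.sum_sub_distrib]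
    exact Finset.sum_congr rfl fun j _ => hp j
  have h2 := M.sum_comp p
  unfold F
  linarith

lemma witness_of_F_eq {p : Fin n → ℝ} {M : Fin n ≃ Fin n}
    (h : F v p = ∑ j, v (M j) j) : ∀ j i', v i' j - p i' ≤ v (M j) j - p (M j) := by
  have h2 := M.sum_comp p
  have hsum : ∑ j, (profit v p j - (v (M j) j - p (M j))) = 0 := by
    have : ∑ j, (profit v p j - (v (M j) j - p (M j)))
        = ∑ j, profit v p j - (∑ j, v (M j) j - ∑ j, p (M j)) := by
      rw [Finset.sum_sub_distrib, Finset.sum_sub_distrib]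
    unfold F at h
    linarith
  intro j i'
  have hj := (Finset.sum_eq_zero_iff_of_nonneg
    (fun j _ => by have := le_profit v p j (M j); linarith)).1 hsum j (mem_univ j)
  have := le_profit v p j i'
  linarith


lemma exists_opt (hv : ∀ i j, 0 ≤ v i j) :
    ∃ q : Fin n → ℝ, (∀ i, 0 ≤ q i) ∧
      (∃ M : Fin n ≃ Fin n, ∀ j i', v i' j - q i' ≤ v (M j) j - q (M j)) ∧
      (∀ p, F v q ≤ F v p) := by
  classical
  set C : ℝ := F v 0 with hC
  have hprofit0 : ∀ (p : Fin n → ℝ), (∀ i, 0 ≤ p i) → (∃ i0, p i0 = 0) →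
      ∀ j, 0 ≤ profit v p j := by
    rintro p hp ⟨i0, hi0⟩ j
    have := le_profit v p j i0
    rw [hi0] at this
    have := hv i0 j
    linarith
  have hC0 : 0 ≤ C := by
    rw [hC]
    unfold F
    have h1 : (0:ℝ) ≤ ∑ j, profit v (0 : Fin n → ℝ) j :=
      Finset.sum_nonneg fun j _ => hprofit0 0 (fun _ => le_refl 0) ⟨Classical.arbitrary _, rfl⟩ j
    simp [h1]
  set K : Set (Fin n → ℝ) := Set.univ.pi fun _ => Set.Icc (0:ℝ) C with hK
  have hKc : IsCompact K := isCompact_univ_pi fun _ => isCompact_Icc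
  have h0K : (0 : Fin n → ℝ) ∈ K := by
    intro i _
    exact ⟨le_refl 0, hC0⟩
  obtain ⟨q, hqK, hqmin⟩ := hKc.exists_isMinOn ⟨0, h0K⟩ (continuous_F v).continuousOn
  have hq0 : ∀ i, 0 ≤ q i := fun i => (hqK i (Set.mem_univ i)).1
  -- global minimality
  have hGlob : ∀ p : Fin n → ℝ, F v q ≤ F v p := by
    intro p
    set t : ℝ := univ.inf' univ_nonempty p with ht
    set p' : Fin n → ℝ := fun i => p i - t with hp'
    have hp'0 : ∀ i, 0 ≤ p' i := fun i => by
      have : univ.inf' univ_nonempty p ≤ p i := Finset.inf'_le (f := p) (mem_univ i)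
      simp only [hp']; linarith
    have hp'z : ∃ i0, p' i0 = 0 := by
      obtain ⟨i0, _, hi0⟩ := Finset.exists_mem_eq_inf' univ_nonempty p
      refine ⟨i0, ?_⟩
      simp only [hp', ht, hi0]
      ring
    have hF' : F v p' = F v p := by
      unfold F
      have h1 : ∑ i, p' i = ∑ i, p i - n * t := by
        simp only [hp']
        rw [Finset.sum_sub_distrib, Finset.sum_const, card_univ]
        simp [nsmul_eq_mul]
      have h2 : ∑ j, profit v p' j = ∑ j, profit v p j + n * t := by
        simp only [hp']
        rw [Finset.sum_congr rfl fun j _ => profit_sub_const v p t j,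
          Finset.sum_add_distrib, Finset.sum_const, card_univ]
        simp [nsmul_eq_mul]
      rw [h1, h2]; ring
    by_contra hcon
    push_neg at hcon
    have hlt : F v p' < F v q := by rw [hF']; exact hcon
    have hqC : F v q ≤ C := hqmin h0K
    have hp'K : p' ∈ K := by
      intro i _
      refine ⟨hp'0 i, ?_⟩
      have hsum : p' i ≤ ∑ k, p' k :=
        Finset.single_le_sum (fun k _ => hp'0 k) (mem_univ i)
      have hpr : (0:ℝ) ≤ ∑ j, profit v p' j :=
        Finset.sum_nonneg fun j _ => hprofit0 p' hp'0 hp'z j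
      have : p' i ≤ F v p' := by unfold F; linarith
      linarith
    exact absurd (hqmin hp'K) (not_le.2 hlt)
  -- Hall's condition for demand sets
  set D : Fin n → Finset (Fin n) :=
    fun j => univ.filter (fun i => profit v q j ≤ v i j - q i) with hD
  have hHall : ∀ T : Finset (Fin n), T.card ≤ (T.biUnion D).card := by
    by_contra hcon
    push_neg at hcon
    obtain ⟨T, hT⟩ := hcon
    set N : Finset (Fin n) := T.biUnion D with hN
    set P : Finset (Fin n × Fin n) :=
      (T ×ˢ (univ : Finset (Fin n))).filter (fun e => e.2 ∉ D e.1) with hP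
    set g : Fin n × Fin n → ℝ := fun e => profit v q e.1 - (v e.2 e.1 - q e.2) with hg
    have hgpos : ∀ e ∈ P, 0 < g e := by
      intro e he
      rw [hP, Finset.mem_filter] at he
      have h2 := he.2
      rw [hD] at h2
      simp only [Finset.mem_filter, mem_univ, true_and, not_le] at h2
      simp only [hg]
      linarith
    set ε : ℝ := if hPn : P.Nonempty then min 1 (P.inf' hPn g) else 1 with hε
    have hεpos : 0 < ε := by
      rw [hε]; split_ifs with hPn
      · exact lt_min one_pos ((Finset.lt_inf'_iff hPn).2 fun e he => hgpos e he)
      · exact one_pos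
    have hεle : ∀ e ∈ P, ε ≤ g e := by
      intro e he
      rw [hε]
      rw [dif_pos ⟨e, he⟩]
      exact le_trans (min_le_right _ _) (Finset.inf'_le g he)
    set p' : Fin n → ℝ := fun i => q i + if i ∈ N then ε else 0 with hp'
    have hqlep' : ∀ i, q i ≤ p' i := by
      intro i; simp only [hp']
      split_ifs <;> linarith
    have hprofitT : ∀ j ∈ T, profit v p' j ≤ profit v q j - ε := by
      intro j hj
      refine profit_le v fun i => ?_
      by_cases hi : i ∈ D j
      · have hiN : i ∈ N := Finset.mem_biUnion.2 ⟨j, hj, hi⟩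
        have hle : v i j - q i ≤ profit v q j := le_profit v q j i
        simp only [hp', if_pos hiN]
        linarith
      · have heP : (j, i) ∈ P := by
          rw [hP, Finset.mem_filter]
          exact ⟨Finset.mem_product.2 ⟨hj, mem_univ i⟩, hi⟩
        have := hεle _ heP
        simp only [hg] at this
        have := hqlep' i
        linarith
    have hprofitle : ∀ j, profit v p' j ≤ profit v q j := by
      intro j
      refine profit_le v fun i => ?_
      have := le_profit v q j i
      have := hqlep' i
      linarith
    have hsum1 : ∑ i, p' i = ∑ i, q i + ε * N.card := by
      simp only [hp']
      rw [Finset.sum_add_distrib]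
      congr 1
      rw [Finset.sum_ite_mem, Finset.univ_inter, Finset.sum_const, nsmul_eq_mul]
      ring
    have hsum2 : ∑ j, profit v p' j ≤ ∑ j, profit v q j - ε * T.card := by
      have h1 : ∑ j, profit v p' j
          ≤ ∑ j, (profit v q j - if j ∈ T then ε else 0) := by
        refine Finset.sum_le_sum fun j _ => ?_
        by_cases hj : j ∈ T
        · rw [if_pos hj]; exact hprofitT j hj
        · rw [if_neg hj]; simpa using hprofitle j
      have h2 : ∑ j, (profit v q j - if j ∈ T then ε else 0)
          = ∑ j, profit v q j - ε * T.card := by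
        rw [Finset.sum_sub_distrib]
        congr 1
        rw [Finset.sum_ite_mem, Finset.univ_inter, Finset.sum_const, nsmul_eq_mul]
        ring
      linarith
    have hcard : (N.card : ℝ) < T.card := by exact_mod_cast hT
    have hFlt : F v p' < F v q := by
      unfold F
      have := mul_lt_mul_of_pos_left hcard hεpos
      linarith
    exact absurd (hGlob p') (not_le.2 hFlt)
  obtain ⟨f, hfinj, hfD⟩ := (Finset.all_card_le_biUnion_card_iff_exists_injective D).1 hHall
  have hfbij : Function.Bijective f := Finite.injective_iff_bijective.1 hfinj
  refine ⟨q, hq0, ⟨Equiv.ofBijective f hfbij, ?_⟩, hGlob⟩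
  intro j i'
  have h1 : profit v q j ≤ v (f j) j - q (f j) := by
    have := hfD j
    rw [hD, Finset.mem_filter] at this
    exact this.2
  have h2 := le_profit v q j i'
  have h3 : (Equiv.ofBijective f hfbij) j = f j := rfl
  rw [h3]
  linarith

lemma F_submod (p p' : Fin n → ℝ) :
    F v (fun i => min (p i) (p' i)) + F v (fun i => max (p i) (p' i)) ≤ F v p + F v p' := by
  have h2 : ∀ j, profit v (fun i => min (p i) (p' i)) j
      + profit v (fun i => max (p i) (p' i)) j ≤ profit v p j + profit v p' j := by
    intro j
    obtain ⟨a, ha⟩ := profit_exists v (fun i => min (p i) (p' i)) j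
    obtain ⟨b, hb⟩ := profit_exists v (fun i => max (p i) (p' i)) j
    have hpa := le_profit v p j a
    have hp'a := le_profit v p' j a
    have hpb := le_profit v p j b
    have hp'b := le_profit v p' j b
    have hmin : profit v (fun i => min (p i) (p' i)) j
        ≤ max (profit v p j) (profit v p' j) := by
      rw [ha]
      rcases le_total (p a) (p' a) with h | h
      · rw [min_eq_left h]; exact le_trans hpa (le_max_left _ _)
      · rw [min_eq_right h]; exact le_trans hp'a (le_max_right _ _)
    have hmax : profit v (fun i => max (p i) (p' i)) j
        ≤ min (profit v p j) (profit v p' j) := by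
      rw [hb]
      refine le_min ?_ ?_
      · have : v b j - max (p b) (p' b) ≤ v b j - p b := by
          have := le_max_left (p b) (p' b); linarith
        exact le_trans this hpb
      · have : v b j - max (p b) (p' b) ≤ v b j - p' b := by
          have := le_max_right (p b) (p' b); linarith
        exact le_trans this hp'b
    have := min_add_max (profit v p j) (profit v p' j)
    rcases le_total (profit v p j) (profit v p' j) with h | h
    · rw [max_eq_right h] at hmin; rw [min_eq_left h] at hmax; linarith
    · rw [max_eq_left h] at hmin; rw [min_eq_right h] at hmax; linarith
  have h1 : ∑ i, min (p i) (p' i) + ∑ i, max (p i) (p' i) = ∑ i, p i + ∑ i, p' i := by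
    rw [← Finset.sum_add_distrib, ← Finset.sum_add_distrib]
    exact Finset.sum_congr rfl fun i _ => min_add_max _ _
  have h3 : ∑ j, (profit v (fun i => min (p i) (p' i)) j
      + profit v (fun i => max (p i) (p' i)) j) ≤ ∑ j, (profit v p j + profit v p' j) :=
    Finset.sum_le_sum fun j _ => h2 j
  rw [Finset.sum_add_distrib, Finset.sum_add_distrib] at h3
  unfold F
  linarith

end Stmt5Aux

/-- there is a unique buyer-optimal market clearing price vector,
and it is the componentwise minimum of all nonnegative market clearing vectors. -/


theorem stmt_5 (n : ℕ) (v : Fin n → Fin n → ℝ) (hv : ∀ i j, 0 ≤ v i j) :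
    (∃! p : Fin n → ℝ, BuyerOptimal v p) ∧
      ∀ p : Fin n → ℝ, BuyerOptimal v p →
        ∀ p' : Fin n → ℝ, (∀ i, 0 ≤ p' i) → IsMC v p' → ∀ i, p i ≤ p' i := by
  classical
  rcases Nat.eq_zero_or_pos n with hn | hn
  · subst hn
    have hMC : ∀ p : Fin 0 → ℝ, BuyerOptimal v p := by
      intro p
      exact ⟨fun i => i.elim0, ⟨Equiv.refl _, fun j => j.elim0⟩, fun p' _ _ => by simp⟩
    exact ⟨⟨0, hMC 0, fun p _ => funext fun i => i.elim0⟩, fun p _ p' _ _ i => i.elim0⟩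
  haveI : NeZero n := ⟨hn.ne'⟩
  obtain ⟨phat, hphat0, hphatMC, hphatmin⟩ := Stmt5Aux.exists_opt v hv
  obtain ⟨Mhat, hMhat⟩ := hphatMC
  set c : ℝ := Stmt5Aux.F v phat with hc
  have hmc_iff : ∀ p : Fin n → ℝ, IsMC v p ↔ Stmt5Aux.F v p = c := by
    intro p
    constructor
    · rintro ⟨M, hM⟩
      have h1 : Stmt5Aux.F v p = ∑ j, v (M j) j := Stmt5Aux.F_eq_of_witness v hM
      have h2 : (∑ j, v (M j) j) ≤ Stmt5Aux.F v phat := Stmt5Aux.mval_le_F v phat M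
      exact le_antisymm (by rw [h1]; exact h2) (hphatmin p)
    · intro h
      refine ⟨Mhat, Stmt5Aux.witness_of_F_eq v ?_⟩
      rw [h, hc]
      exact Stmt5Aux.F_eq_of_witness v hMhat
  set S : Set (Fin n → ℝ) := {p | (∀ i, 0 ≤ p i) ∧ IsMC v p} with hS
  have hphatS : phat ∈ S := ⟨hphat0, ⟨Mhat, hMhat⟩⟩
  have hmin_closed : ∀ p ∈ S, ∀ p' ∈ S, (fun i => min (p i) (p' i)) ∈ S := by
    intro p hp p' hp'
    refine ⟨fun i => le_min (hp.1 i) (hp'.1 i), ?_⟩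
    rw [hmc_iff]
    have h1 := Stmt5Aux.F_submod v p p'
    have h2 := hphatmin (fun i => min (p i) (p' i))
    have h3 := hphatmin (fun i => max (p i) (p' i))
    have h4 := (hmc_iff p).1 hp.2
    have h5 := (hmc_iff p').1 hp'.2
    linarith
  have hinf_closed : ∀ (g : Fin n → (Fin n → ℝ)), (∀ i, g i ∈ S) →
      (fun k => Finset.univ.inf' Finset.univ_nonempty (fun i => g i k)) ∈ S := by
    intro g hg
    have key : ∀ (s : Finset (Fin n)) (hs : s.Nonempty),
        (fun k => s.inf' hs (fun i => g i k)) ∈ S := by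
      intro s hs
      induction hs using Finset.Nonempty.cons_induction with
      | singleton a => simpa using hg a
      | cons a s ha hs ih =>
        have he : (fun k => (Finset.cons a s ha).inf' (Finset.cons_nonempty ha)
            (fun i => g i k)) = fun k => min (g a k) (s.inf' hs (fun i => g i k)) := by
          funext k
          rw [Finset.inf'_cons (H := hs)]
        rw [he]
        exact hmin_closed _ (hg a) _ ih
    exact key Finset.univ Finset.univ_nonempty
  have hbdd : ∀ k, BddBelow ((fun p : Fin n → ℝ => p k) '' S) := by
    intro k
    exact ⟨0, by rintro x ⟨p, hp, rfl⟩; exact hp.1 k⟩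
  have hne : ∀ k, ((fun p : Fin n → ℝ => p k) '' S).Nonempty :=
    fun k => ⟨phat k, phat, hphatS, rfl⟩
  set q : Fin n → ℝ := fun k => sInf ((fun p : Fin n → ℝ => p k) '' S) with hq
  have hqle : ∀ p ∈ S, ∀ k, q k ≤ p k := fun p hp k => csInf_le (hbdd k) ⟨p, hp, rfl⟩
  have hq0 : ∀ k, 0 ≤ q k := fun k =>
    le_csInf (hne k) (by rintro x ⟨p, hp, rfl⟩; exact hp.1 k)
  have hF_def : ∀ p : Fin n → ℝ, Stmt5Aux.F v p = ∑ i, p i + ∑ j, profit v p j :=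
    fun p => rfl
  have hqF : Stmt5Aux.F v q = c := by
    refine le_antisymm ?_ (hphatmin q)
    have hstep : ∀ ε : ℝ, 0 < ε → Stmt5Aux.F v q ≤ c + n * ε := by
      intro ε hε
      have hch : ∀ k, ∃ p, p ∈ S ∧ p k < q k + ε := by
        intro k
        have hlt : sInf ((fun p : Fin n → ℝ => p k) '' S) < q k + ε := by
          have : q k = sInf ((fun p : Fin n → ℝ => p k) '' S) := rfl
          rw [← this]; linarith
        obtain ⟨x, ⟨p, hp, rfl⟩, hx⟩ := exists_lt_of_csInf_lt (hne k) hlt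
        exact ⟨p, hp, hx⟩
      choose g hgS hglt using hch
      set r : Fin n → ℝ := fun k => Finset.univ.inf' Finset.univ_nonempty (fun i => g i k)
        with hr
      have hrS : r ∈ S := hinf_closed g hgS
      have hqr : ∀ k, q k ≤ r k := by
        intro k
        rw [hr]
        exact Finset.le_inf' _ _ (fun i _ => hqle (g i) (hgS i) k)
      have hrq : ∀ k, r k < q k + ε := by
        intro k
        have h1 : r k ≤ g k k := Finset.inf'_le (f := fun i => g i k) (Finset.mem_univ k)
        exact lt_of_le_of_lt h1 (hglt k)
      have h1 : ∑ i, q i ≤ ∑ i, r i := Finset.sum_le_sum fun i _ => hqr i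
      have h2 : ∀ j, profit v q j ≤ profit v r j + ε := by
        intro j
        refine Stmt5Aux.profit_le v fun i => ?_
        have ha := Stmt5Aux.le_profit v r j i
        have hb := hrq i
        linarith
      have h3 : ∑ j, profit v q j ≤ ∑ j, profit v r j + n * ε := by
        have h := Finset.sum_le_sum (fun j (_ : j ∈ Finset.univ) => h2 j)
        rw [Finset.sum_add_distrib, Finset.sum_const, Finset.card_univ] at h
        simpa [nsmul_eq_mul] using h
      have h4 : Stmt5Aux.F v r = c := (hmc_iff r).1 hrS.2
      rw [hF_def] at h4 ⊢
      linarith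
    by_contra hcon
    push_neg at hcon
    have hnpos : (0:ℝ) < n + 1 := by positivity
    have hεpos : 0 < (Stmt5Aux.F v q - c) / (n + 1) := by
      apply div_pos <;> linarith
    have := hstep _ hεpos
    have hfrac : (n : ℝ) * ((Stmt5Aux.F v q - c) / (n + 1)) < Stmt5Aux.F v q - c := by
      rw [mul_div_assoc', div_lt_iff₀ hnpos]
      nlinarith
    linarith
  have hqS : q ∈ S := ⟨hq0, (hmc_iff q).2 hqF⟩
  have hBOq : BuyerOptimal v q :=
    ⟨hq0, hqS.2, fun p' h1 h2 => Finset.sum_le_sum fun i _ => hqle p' ⟨h1, h2⟩ i⟩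
  have huniq : ∀ p, BuyerOptimal v p → p = q := by
    intro p hp
    have hpS : p ∈ S := ⟨hp.1, hp.2.1⟩
    have h1 : ∑ i, p i ≤ ∑ i, q i := hp.2.2 q hq0 hqS.2
    have h2 : ∀ k, q k ≤ p k := hqle p hpS
    have hz : ∑ i, (p i - q i) = 0 := by
      have ha : ∑ i, (p i - q i) ≤ 0 := by
        rw [Finset.sum_sub_distrib]; linarith
      have hb : (0:ℝ) ≤ ∑ i, (p i - q i) :=
        Finset.sum_nonneg fun i _ => by have := h2 i; linarith
      linarith
    funext k
    have := (Finset.sum_eq_zero_iff_of_nonneg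
      (fun i _ => by have := h2 i; linarith)).1 hz k (Finset.mem_univ k)
    linarith
  exact ⟨⟨q, hBOq, huniq⟩, fun p hp p' h1 h2 i => by
    rw [huniq p hp]; exact hqle p' ⟨h1, h2⟩ i⟩


end
end

section
/- The set of nonnegative market clearing price vectors, ordered componentwise, forms a meet-semilattice: it is nonempty and closed under componentwise minimum, and hence (being a finite-dimensional polyhedral set bounded below) has a unique minimal element. -/
open Finset

noncomputable section

namespace MCaux

variable {n : ℕ}

/-- Dual objective. -/
def Dual (v : Fin n → Fin n → ℝ) (p : Fin n → ℝ) : ℝ :=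
  ∑ i, p i + ∑ j, profit v p j

lemma profit_ge [Nonempty (Fin n)] (v : Fin n → Fin n → ℝ) (p : Fin n → ℝ) (i j : Fin n) :
    v i j - p i ≤ profit v p j :=
  le_ciSup (Set.Finite.bddAbove (Set.finite_range (fun i => v i j - p i))) i

lemma profit_le [Nonempty (Fin n)] (v : Fin n → Fin n → ℝ) (p : Fin n → ℝ) (j : Fin n)
    {c : ℝ} (h : ∀ i, v i j - p i ≤ c) : profit v p j ≤ c :=
  ciSup_le h

lemma exists_vstar (v : Fin n → Fin n → ℝ) : ∃ M : Fin n ≃ Fin n, mval v M = vstar v := by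
  obtain ⟨M, hM⟩ := Finite.exists_max (fun M : Fin n ≃ Fin n => mval v M)
  exact ⟨M, le_antisymm (le_ciSup (Set.Finite.bddAbove (Set.finite_range _)) M) (ciSup_le hM)⟩

lemma mval_le_vstar (v : Fin n → Fin n → ℝ) (M : Fin n ≃ Fin n) : mval v M ≤ vstar v :=
  le_ciSup (Set.Finite.bddAbove (Set.finite_range _)) M

/-- Weak duality. -/
lemma weak (v : Fin n → Fin n → ℝ) (p q : Fin n → ℝ) (hf : ∀ i j, v i j ≤ p i + q j) :
    vstar v ≤ ∑ i, p i + ∑ j, q j := by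
  refine ciSup_le fun M => ?_
  have h1 : mval v M ≤ ∑ j, (p (M j) + q j) :=
    Finset.sum_le_sum fun j _ => hf (M j) j
  have h2 : ∑ j, (p (M j) + q j) = ∑ j, p (M j) + ∑ j, q j := Finset.sum_add_distrib
  have h3 : ∑ j, p (M j) = ∑ i, p i := Equiv.sum_comp M p
  linarith

lemma vstar_le_dual [Nonempty (Fin n)] (v : Fin n → Fin n → ℝ) (p : Fin n → ℝ) :
    vstar v ≤ Dual v p :=
  weak v p (profit v p) fun i j => by
    have := profit_ge v p i j; linarith

lemma isMC_iff [Nonempty (Fin n)] (v : Fin n → Fin n → ℝ) (p : Fin n → ℝ) :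
    IsMC v p ↔ Dual v p = vstar v := by
  constructor
  · rintro ⟨M, hM⟩
    have hpr : ∀ j, profit v p j = v (M j) j - p (M j) := fun j =>
      le_antisymm (profit_le v p j fun i => hM j i) (profit_ge v p (M j) j)
    have h1 : Dual v p = mval v M := by
      have : ∑ j, profit v p j = ∑ j, (v (M j) j - p (M j)) :=
        Finset.sum_congr rfl fun j _ => hpr j
      have h3 : ∑ j, p (M j) = ∑ i, p i := Equiv.sum_comp M p
      simp only [Dual, this, mval, Finset.sum_sub_distrib]
      linarith
    exact le_antisymm (h1 ▸ mval_le_vstar v M) (vstar_le_dual v p)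
  · intro hD
    obtain ⟨M, hM⟩ := exists_vstar v
    have hsum : ∑ j, (v (M j) j - p (M j)) = ∑ j, profit v p j := by
      have h3 : ∑ j, p (M j) = ∑ i, p i := Equiv.sum_comp M p
      have : mval v M = vstar v := hM
      simp only [mval] at this
      simp only [Finset.sum_sub_distrib, h3]
      simp only [Dual] at hD
      linarith
    have hterm := (Finset.sum_eq_sum_iff_of_le (fun j (_ : j ∈ Finset.univ) => profit_ge v p (M j) j)).mp hsum
    exact ⟨M, fun j i' => by
      have h1 := hterm j (Finset.mem_univ j)
      have h2 := profit_ge v p i' j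
      linarith⟩


lemma profit_min [Nonempty (Fin n)] (v : Fin n → Fin n → ℝ) (p' p'' : Fin n → ℝ) (j : Fin n) :
    profit v (fun i => min (p' i) (p'' i)) j = max (profit v p' j) (profit v p'' j) := by
  refine le_antisymm (profit_le v _ j fun i => ?_) (max_le ?_ ?_)
  · rcases min_cases (p' i) (p'' i) with ⟨h, _⟩ | ⟨h, _⟩
    · rw [h]; exact le_max_of_le_left (profit_ge v p' i j)
    · rw [h]; exact le_max_of_le_right (profit_ge v p'' i j)
  · refine profit_le v p' j fun i => le_trans ?_ (profit_ge v (fun i => min (p' i) (p'' i)) i j)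
    have := min_le_left (p' i) (p'' i); linarith [profit_ge v (fun i => min (p' i) (p'' i)) i j]
  · refine profit_le v p'' j fun i => le_trans ?_ (profit_ge v (fun i => min (p' i) (p'' i)) i j)
    have := min_le_right (p' i) (p'' i); linarith [profit_ge v (fun i => min (p' i) (p'' i)) i j]

lemma isMC_min [Nonempty (Fin n)] (v : Fin n → Fin n → ℝ) (p' p'' : Fin n → ℝ)
    (h' : IsMC v p') (h'' : IsMC v p'') : IsMC v (fun i => min (p' i) (p'' i)) := by
  rw [isMC_iff] at *
  refine le_antisymm ?_ (vstar_le_dual v _)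
  -- feasibility of (max p, min q)
  have hfeas : ∀ i j, v i j ≤ max (p' i) (p'' i) + min (profit v p' j) (profit v p'' j) := by
    intro i j
    rcases min_cases (profit v p' j) (profit v p'' j) with ⟨h, _⟩ | ⟨h, _⟩
    · rw [h]
      have := profit_ge v p' i j
      have := le_max_left (p' i) (p'' i)
      linarith
    · rw [h]
      have := profit_ge v p'' i j
      have := le_max_right (p' i) (p'' i)
      linarith
  have hweak := weak v (fun i => max (p' i) (p'' i)) (fun j => min (profit v p' j) (profit v p'' j)) hfeas
  have e1 : ∑ i, min (p' i) (p'' i) + ∑ i, max (p' i) (p'' i) = ∑ i, p' i + ∑ i, p'' i := by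
    rw [← Finset.sum_add_distrib, ← Finset.sum_add_distrib]
    exact Finset.sum_congr rfl fun i _ => min_add_max _ _
  have e2 : ∑ j, max (profit v p' j) (profit v p'' j) + ∑ j, min (profit v p' j) (profit v p'' j)
      = ∑ j, profit v p' j + ∑ j, profit v p'' j := by
    rw [← Finset.sum_add_distrib, ← Finset.sum_add_distrib]
    exact Finset.sum_congr rfl fun j _ => by rw [add_comm]; exact min_add_max _ _
  have e3 : ∑ j, profit v (fun i => min (p' i) (p'' i)) j
      = ∑ j, max (profit v p' j) (profit v p'' j) :=
    Finset.sum_congr rfl fun j _ => profit_min v p' p'' j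
  simp only [Dual] at *
  linarith


lemma profit_continuous [Nonempty (Fin n)] (v : Fin n → Fin n → ℝ) (j : Fin n) :
    Continuous fun p : Fin n → ℝ => profit v p j := by
  have h : (fun p : Fin n → ℝ => profit v p j)
      = fun p => Finset.univ.sup' Finset.univ_nonempty (fun i => v i j - p i) := by
    funext p
    rw [profit, ← Finset.sup'_univ_eq_ciSup]
  rw [h]
  exact Continuous.finset_sup'_apply Finset.univ_nonempty
    fun i _ => continuous_const.sub (continuous_apply i)

lemma dual_continuous [Nonempty (Fin n)] (v : Fin n → Fin n → ℝ) :
    Continuous (Dual v) := by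
  refine Continuous.add ?_ ?_
  · exact continuous_finset_sum _ fun i _ => continuous_apply i
  · exact continuous_finset_sum _ fun j _ => profit_continuous v j

lemma dual_shift [Nonempty (Fin n)] (v : Fin n → Fin n → ℝ) (p : Fin n → ℝ) (c : ℝ) :
    Dual v (fun i => p i - c) = Dual v p := by
  have hpr : ∀ j, profit v (fun i => p i - c) j = profit v p j + c := by
    intro j
    refine le_antisymm (profit_le _ _ _ fun i => ?_) ?_
    · have := profit_ge v p i j; linarith
    · have : profit v p j ≤ profit v (fun i => p i - c) j - c :=
        profit_le v p j fun i => by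
          have := profit_ge v (fun i => p i - c) i j; linarith
      linarith
  simp only [Dual, Finset.sum_sub_distrib, hpr, Finset.sum_add_distrib, Finset.sum_const,
    Finset.card_univ, Fintype.card_fin]
  ring


lemma exists_mc (hn : 0 < n) (v : Fin n → Fin n → ℝ) (hv : ∀ i j, 0 ≤ v i j) :
    ∃ p : Fin n → ℝ, (∀ i, 0 ≤ p i) ∧ IsMC v p := by
  haveI : Nonempty (Fin n) := ⟨⟨0, hn⟩⟩
  classical
  set C : ℝ := ∑ i, ∑ j, v i j with hC
  have hCv : ∀ i j, v i j ≤ C := by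
    intro i j
    calc v i j ≤ ∑ j, v i j := Finset.single_le_sum (fun j _ => hv i j) (Finset.mem_univ j)
      _ ≤ C := Finset.single_le_sum
          (fun i (_ : i ∈ Finset.univ) => Finset.sum_nonneg fun j _ => hv i j) (Finset.mem_univ i)
  have hC0 : 0 ≤ C := Finset.sum_nonneg fun i _ => Finset.sum_nonneg fun j _ => hv i j
  set K : Set (Fin n → ℝ) := Set.Icc 0 (fun _ => C) with hK
  have h0K : (0 : Fin n → ℝ) ∈ K := Set.mem_Icc.mpr ⟨le_refl _, fun i => hC0⟩
  obtain ⟨p, hpK, hpmin⟩ := (isCompact_Icc (a := (0 : Fin n → ℝ)) (b := fun _ => C)).exists_isMinOn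
    ⟨0, h0K⟩ (dual_continuous v).continuousOn
  have hp0 : ∀ i, 0 ≤ p i := fun i => (Set.mem_Icc.mp hpK).1 i
  have hpmin' : ∀ q ∈ K, Dual v p ≤ Dual v q := fun q hq => hpmin hq
  -- Dual v 0 ≤ C
  have hDual0 : Dual v 0 ≤ C := by
    have : ∀ j, profit v 0 j ≤ ∑ i, v i j :=
      fun j => profit_le v 0 j fun i => by
        have : v i j ≤ ∑ i, v i j := Finset.single_le_sum (fun i _ => hv i j) (Finset.mem_univ i)
        simpa using this
    have h1 : ∑ j, profit v 0 j ≤ ∑ j, ∑ i, v i j := Finset.sum_le_sum fun j _ => this j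
    have h2 : ∑ j, ∑ i, v i j = C := by rw [hC, Finset.sum_comm]
    simp only [Dual, Pi.zero_apply, Finset.sum_const, smul_zero, zero_add]
    simpa [h2] using h1
  -- p is a global minimizer over nonnegative price vectors
  have hglob : ∀ q : Fin n → ℝ, (∀ i, 0 ≤ q i) → Dual v p ≤ Dual v q := by
    intro q hq
    obtain ⟨i0, hi0⟩ := Finite.exists_min q
    set q' : Fin n → ℝ := fun i => q i - q i0 with hq'def
    have hq' : ∀ i, 0 ≤ q' i := fun i => sub_nonneg.mpr (hi0 i)
    have hDq' : Dual v q' = Dual v q := dual_shift v q (q i0)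
    have hprof : ∀ j, 0 ≤ profit v q' j := by
      intro j
      have := profit_ge v q' i0 j
      have hz : q' i0 = 0 := sub_self _
      rw [hz] at this
      have := hv i0 j
      linarith
    by_cases hbox : ∀ i, q' i ≤ C
    · have hmem : q' ∈ K := Set.mem_Icc.mpr ⟨fun i => hq' i, fun i => hbox i⟩
      calc Dual v p ≤ Dual v q' := hpmin' q' hmem
        _ = Dual v q := hDq'
    · push_neg at hbox
      obtain ⟨i1, hi1⟩ := hbox
      have h1 : C < ∑ i, q' i :=
        lt_of_lt_of_le hi1 (Finset.single_le_sum (fun i _ => hq' i) (Finset.mem_univ i1))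
      have h2 : ∑ i, q' i ≤ Dual v q' := by
        have : 0 ≤ ∑ j, profit v q' j := Finset.sum_nonneg fun j _ => hprof j
        simp only [Dual]; linarith
      have h3 : Dual v p ≤ Dual v 0 := hpmin' 0 h0K
      linarith
  -- show p is market clearing
  refine ⟨p, hp0, ?_⟩
  by_contra hmc
  set Dem : Fin n → Finset (Fin n) :=
    fun j => Finset.univ.filter fun i => profit v p j ≤ v i j - p i with hDem
  -- no system of distinct representatives
  obtain ⟨S, hS⟩ : ∃ S : Finset (Fin n), (S.biUnion Dem).card < S.card := by
    by_contra h
    push_neg at h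
    obtain ⟨f, hfinj, hf⟩ := (Finset.all_card_le_biUnion_card_iff_exists_injective Dem).mp
      fun s => h s
    refine hmc ⟨Equiv.ofBijective f ((Finite.injective_iff_bijective).mp hfinj), fun j i' => ?_⟩
    have h1 : profit v p j ≤ v (f j) j - p (f j) := (Finset.mem_filter.mp (hf j)).2
    have h2 := profit_ge v p i' j
    simpa using le_trans h2 h1
  -- choose ε
  set ES : Finset ℝ := insert 1 ((Finset.univ.filter
      fun ij : Fin n × Fin n => v ij.1 ij.2 - p ij.1 < profit v p ij.2).image
      fun ij => profit v p ij.2 - (v ij.1 ij.2 - p ij.1)) with hES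
  have hESne : ES.Nonempty := ⟨1, Finset.mem_insert_self _ _⟩
  set ε : ℝ := ES.min' hESne with hε
  have hεpos : 0 < ε := by
    have hmem := Finset.min'_mem ES hESne
    rcases Finset.mem_insert.mp hmem with h | h
    · rw [hε, h]; norm_num
    · obtain ⟨ij, hij, hij2⟩ := Finset.mem_image.mp h
      have := (Finset.mem_filter.mp hij).2
      rw [hε, ← hij2]; linarith
  have hgap : ∀ i j, i ∉ Dem j → v i j - p i ≤ profit v p j - ε := by
    intro i j hi
    have hlt : v i j - p i < profit v p j := by
      have : ¬ profit v p j ≤ v i j - p i := by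
        intro hcon
        exact hi (Finset.mem_filter.mpr ⟨Finset.mem_univ i, hcon⟩)
      linarith [not_le.mp this]
    have hmem : profit v p j - (v i j - p i) ∈ ES :=
      Finset.mem_insert_of_mem (Finset.mem_image_of_mem _
        (Finset.mem_filter.mpr ⟨Finset.mem_univ (i, j), hlt⟩))
    have := Finset.min'_le ES _ hmem
    rw [← hε] at this
    linarith
  set N : Finset (Fin n) := S.biUnion Dem with hN
  set p' : Fin n → ℝ := fun i => p i + if i ∈ N then ε else 0 with hp'
  have hp'ge : ∀ i, p i ≤ p' i := by
    intro i; rw [hp']; dsimp only; split <;> linarith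
  have hp'0 : ∀ i, 0 ≤ p' i := fun i => le_trans (hp0 i) (hp'ge i)
  have hprofle : ∀ j, profit v p' j ≤ profit v p j := by
    intro j
    refine profit_le _ _ _ fun i => ?_
    have h1 := hp'ge i
    have h2 := profit_ge v p i j
    linarith
  have hprofS : ∀ j ∈ S, profit v p' j ≤ profit v p j - ε := by
    intro j hj
    refine profit_le _ _ _ fun i => ?_
    by_cases hiN : i ∈ N
    · have hpe : p' i = p i + ε := by rw [hp']; simp [hiN]
      rw [hpe]
      have := profit_ge v p i j
      linarith
    · have hiD : i ∉ Dem j := fun h => hiN (Finset.mem_biUnion.mpr ⟨j, hj, h⟩)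
      have hpe : p' i = p i := by rw [hp']; simp [hiN]
      rw [hpe]
      exact hgap i j hiD
  have hsum1 : ∑ i, p' i = ∑ i, p i + N.card * ε := by
    rw [hp']
    rw [Finset.sum_add_distrib]
    congr 1
    rw [Finset.sum_ite_mem, Finset.univ_inter, Finset.sum_const, nsmul_eq_mul]
  have hsum2 : ∑ j, profit v p' j ≤ ∑ j, profit v p j - S.card * ε := by
    have hbound : ∀ j ∈ Finset.univ, profit v p' j ≤ profit v p j - (if j ∈ S then ε else 0) := by
      intro j _
      by_cases hj : j ∈ S
      · simpa [hj] using hprofS j hj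
      · simpa [hj] using hprofle j
    have := Finset.sum_le_sum hbound
    rw [Finset.sum_sub_distrib, Finset.sum_ite_mem, Finset.univ_inter, Finset.sum_const,
      nsmul_eq_mul] at this
    exact this
  have hfin : Dual v p' < Dual v p := by
    have hNS : (N.card : ℝ) < S.card := by exact_mod_cast hS
    have hmul : (N.card : ℝ) * ε < S.card * ε := by
      exact mul_lt_mul_of_pos_right hNS hεpos
    simp only [Dual]
    linarith
  exact absurd (hglob p' hp'0) (not_le.mpr hfin)

end MCaux

/-- the set of nonnegative market clearing price vectors is nonempty,
closed under componentwise minimum, and has a unique least element. -/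
theorem stmt_6 (n : ℕ) (v : Fin n → Fin n → ℝ) (hv : ∀ i j, 0 ≤ v i j) :
    {p : Fin n → ℝ | (∀ i, 0 ≤ p i) ∧ IsMC v p}.Nonempty ∧
      (∀ p' p'' : Fin n → ℝ,
        p' ∈ {p : Fin n → ℝ | (∀ i, 0 ≤ p i) ∧ IsMC v p} →
        p'' ∈ {p : Fin n → ℝ | (∀ i, 0 ≤ p i) ∧ IsMC v p} →
        (fun i => min (p' i) (p'' i)) ∈ {p : Fin n → ℝ | (∀ i, 0 ≤ p i) ∧ IsMC v p}) ∧
      (∃! p : Fin n → ℝ, p ∈ {p : Fin n → ℝ | (∀ i, 0 ≤ p i) ∧ IsMC v p} ∧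
        ∀ p' ∈ {p : Fin n → ℝ | (∀ i, 0 ≤ p i) ∧ IsMC v p}, ∀ i, p i ≤ p' i) := by
  classical
  rcases Nat.eq_zero_or_pos n with hn | hn
  · subst hn
    have hmc : ∀ p : Fin 0 → ℝ, IsMC v p := fun p => ⟨Equiv.refl _, fun j => j.elim0⟩
    exact ⟨⟨0, fun i => i.elim0, hmc 0⟩,
      fun p' p'' _ _ => ⟨fun i => i.elim0, hmc _⟩,
      ⟨0, ⟨⟨fun i => i.elim0, hmc 0⟩, fun p' _ i => i.elim0⟩,
        fun y _ => funext fun i => i.elim0⟩⟩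
  haveI : Nonempty (Fin n) := ⟨⟨0, hn⟩⟩
  obtain ⟨p0, hp00, hp0mc⟩ := MCaux.exists_mc hn v hv
  have hp0 : p0 ∈ {p : Fin n → ℝ | (∀ i, 0 ≤ p i) ∧ IsMC v p} := ⟨hp00, hp0mc⟩
  set S := {p : Fin n → ℝ | (∀ i, 0 ≤ p i) ∧ IsMC v p} with hSdef
  have hmin : ∀ p' p'', p' ∈ S → p'' ∈ S → (fun i => min (p' i) (p'' i)) ∈ S := by
    intro p' p'' h' h''
    exact ⟨fun i => le_min (h'.1 i) (h''.1 i), MCaux.isMC_min v p' p'' h'.2 h''.2⟩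
  refine ⟨⟨p0, hp0⟩, hmin, ?_⟩
  set T : Fin n → Set ℝ := fun i => (fun p => p i) '' S with hT
  have hTne : ∀ i, (T i).Nonempty := fun i => ⟨p0 i, ⟨p0, hp0, rfl⟩⟩
  have hTbdd : ∀ i, BddBelow (T i) := by
    intro i
    refine ⟨0, ?_⟩
    rintro x ⟨p, hp, rfl⟩
    exact hp.1 i
  set pm : Fin n → ℝ := fun i => sInf (T i) with hpm
  have hpmle : ∀ p ∈ S, ∀ i, pm i ≤ p i := fun p hp i => csInf_le (hTbdd i) ⟨p, hp, rfl⟩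
  have hpm0 : ∀ i, 0 ≤ pm i := by
    intro i
    refine le_csInf (hTne i) ?_
    rintro x ⟨p, hp, rfl⟩
    exact hp.1 i
  have hiter : ∀ (f : Fin n → (Fin n → ℝ)), (∀ k, f k ∈ S) →
      ∀ s : Finset (Fin n), ∃ q, q ∈ S ∧ ∀ k ∈ s, ∀ i, q i ≤ f k i := by
    intro f hf s
    induction s using Finset.induction_on with
    | empty => exact ⟨p0, hp0, fun k hk => absurd hk (Finset.notMem_empty k)⟩
    | @insert a s ha ih =>
      obtain ⟨q, hqS, hq⟩ := ih
      refine ⟨fun i => min (f a i) (q i), hmin _ _ (hf a) hqS, ?_⟩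
      intro k hk i
      rcases Finset.mem_insert.mp hk with rfl | hk
      · exact min_le_left _ _
      · exact le_trans (min_le_right _ _) (hq k hk i)
  have hkey : ∀ ε : ℝ, 0 < ε → MCaux.Dual v pm ≤ vstar v + n * ε := by
    intro ε hε
    have hch : ∀ i, ∃ p ∈ S, p i < pm i + ε := by
      intro i
      obtain ⟨x, hx1, hx2⟩ := Real.lt_sInf_add_pos (hTne i) hε
      obtain ⟨p, hp, rfl⟩ := hx1
      exact ⟨p, hp, hx2⟩
    choose f hfS hflt using hch
    obtain ⟨q, hqS, hq⟩ := hiter f hfS Finset.univ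
    have hq1 : ∀ i, pm i ≤ q i := hpmle q hqS
    have hq2 : ∀ i, q i ≤ pm i + ε := fun i =>
      le_trans (hq i (Finset.mem_univ i) i) (le_of_lt (hflt i))
    have hprof : ∀ j, profit v pm j ≤ profit v q j + ε := by
      intro j
      refine MCaux.profit_le v pm j fun i => ?_
      have h1 := MCaux.profit_ge v q i j
      have h2 := hq2 i
      linarith
    have hDq : MCaux.Dual v q = vstar v := (MCaux.isMC_iff v q).mp hqS.2
    have h1 : ∑ i, pm i ≤ ∑ i, q i := Finset.sum_le_sum fun i _ => hq1 i
    have h2 : ∑ j, profit v pm j ≤ ∑ j, profit v q j + n * ε := by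
      have h3 := Finset.sum_le_sum fun j (_ : j ∈ Finset.univ) => hprof j
      rw [Finset.sum_add_distrib, Finset.sum_const, Finset.card_univ, Fintype.card_fin,
        nsmul_eq_mul] at h3
      exact h3
    simp only [MCaux.Dual] at hDq ⊢
    linarith
  have hDpm : MCaux.Dual v pm = vstar v := by
    refine le_antisymm ?_ (MCaux.vstar_le_dual v pm)
    refine le_of_forall_pos_le_add fun ε hε => ?_
    have hkey' := hkey (ε / n) (by positivity)
    have hne : (n : ℝ) ≠ 0 := by positivity
    have : (n : ℝ) * (ε / n) = ε := by field_simp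
    linarith
  have hpmS : pm ∈ S := ⟨hpm0, (MCaux.isMC_iff v pm).mpr hDpm⟩
  refine ⟨pm, ⟨hpmS, hpmle⟩, ?_⟩
  rintro y ⟨hyS, hyle⟩
  funext i
  exact le_antisymm (hyle pm hpmS i) (hpmle y hyS i)

end
end

section
/- Let p be market clearing with perfect matching M contained in the equality graph. If every buyer j is joined by an M-alternating path in the equality graph (starting and ending with a matching edge) to some item i with p_i = 0, then p is buyer optimal, i.e., for every nonnegative market clearing price vector p̃ we have p̃_i ≥ p_i for every item i (p is componentwise minimal, so Σ p_i is minimal). -/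
open Finset

noncomputable section

lemma le_profit' {n : ℕ} (v : Fin n → Fin n → ℝ) (p : Fin n → ℝ) (i j : Fin n) :
    v i j - p i ≤ profit v p j := by
  unfold profit
  exact le_ciSup (f := fun i => v i j - p i) (Set.Finite.bddAbove (Set.finite_range _)) i

lemma witness_profit' {n : ℕ} [Nonempty (Fin n)] {v : Fin n → Fin n → ℝ} {p : Fin n → ℝ}
    {M : Fin n ≃ Fin n} (h : ClearingWitness v p M) (j : Fin n) :
    profit v p j = v (M j) j - p (M j) :=
  le_antisymm (ciSup_le fun i => h j i) (le_profit' v p (M j) j)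

lemma sum_matching_le' {n : ℕ} (v : Fin n → Fin n → ℝ) (p : Fin n → ℝ) (N : Fin n ≃ Fin n) :
    mval v N ≤ ∑ i, p i + ∑ j, profit v p j := by
  calc mval v N ≤ ∑ j, (p (N j) + profit v p j) := by
        refine Finset.sum_le_sum fun j _ => ?_
        have := le_profit' v p (N j) j; linarith
    _ = ∑ j, p (N j) + ∑ j, profit v p j := Finset.sum_add_distrib
    _ = ∑ i, p i + ∑ j, profit v p j := by rw [Equiv.sum_comp N p]

lemma sum_matching_eq' {n : ℕ} [Nonempty (Fin n)] {v : Fin n → Fin n → ℝ} {p : Fin n → ℝ}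
    {M : Fin n ≃ Fin n} (h : ClearingWitness v p M) :
    mval v M = ∑ i, p i + ∑ j, profit v p j := by
  calc mval v M = ∑ j, (p (M j) + profit v p j) := by
        refine Finset.sum_congr rfl fun j _ => ?_
        rw [witness_profit' h j]; ring
    _ = ∑ j, p (M j) + ∑ j, profit v p j := Finset.sum_add_distrib
    _ = ∑ i, p i + ∑ j, profit v p j := by rw [Equiv.sum_comp M p]

/-- if every buyer is joined by an `M`-alternating path in the equality
graph (starting and ending with a matching edge) to a zero-priced item, then `p` is
componentwise minimal among nonnegative market clearing prices, hence buyer optimal. -/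
theorem stmt_7 (n : ℕ) (v : Fin n → Fin n → ℝ) (hv : ∀ i j, 0 ≤ v i j)
    (p : Fin n → ℝ) (hp : ∀ i, 0 ≤ p i)
    (M : Fin n ≃ Fin n) (hM : ClearingWitness v p M)
    (hpath : ∀ j, AltPathZero v p M j) :
    ∀ p' : Fin n → ℝ, (∀ i, 0 ≤ p' i) → IsMC v p' →
      (∀ i, p i ≤ p' i) ∧ (∑ i, p i ≤ ∑ i, p' i) := by
  intro p' hp' hmc'
  rcases Nat.eq_zero_or_pos n with h0 | hn
  · subst h0
    exact ⟨fun i => i.elim0, by simp⟩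
  have : Nonempty (Fin n) := ⟨⟨0, hn⟩⟩
  obtain ⟨M', hM'⟩ := hmc'
  -- totals agree: both matchings are optimal, both duals tight
  have hEq : mval v M = ∑ i, p i + ∑ j, profit v p j := sum_matching_eq' hM
  have hEq' : mval v M' = ∑ i, p' i + ∑ j, profit v p' j := sum_matching_eq' hM'
  have h1 : mval v M ≤ ∑ i, p' i + ∑ j, profit v p' j := sum_matching_le' v p' M
  have h2 : mval v M' ≤ ∑ i, p i + ∑ j, profit v p j := sum_matching_le' v p M'
  have htot : ∑ i, p' i + ∑ j, profit v p' j = mval v M := by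
    rw [hEq'] at h2; rw [hEq]; linarith
  -- complementary slackness: each edge of M is tight for (p', q')
  have hterm : ∀ j, p' (M j) + profit v p' j = v (M j) j := by
    have hsum : ∑ j, (p' (M j) + profit v p' j - v (M j) j) = 0 := by
      have e1 : ∑ j, (p' (M j) + profit v p' j - v (M j) j)
          = (∑ j, p' (M j) + ∑ j, profit v p' j) - mval v M := by
        unfold mval
        rw [← Finset.sum_add_distrib, ← Finset.sum_sub_distrib]
      rw [e1, Equiv.sum_comp M p', htot]; ring
    have hnn : ∀ j ∈ Finset.univ, 0 ≤ p' (M j) + profit v p' j - v (M j) j := by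
      intro j _
      have := le_profit' v p' (M j) j; linarith
    intro j
    have := (Finset.sum_eq_zero_iff_of_nonneg hnn).1 hsum j (Finset.mem_univ j)
    linarith
  have key : ∀ i, p i ≤ p' i := by
    intro i
    obtain ⟨k, js, hjs0, hstep, hend⟩ := hpath (M.symm i)
    have mono : ∀ t : Fin (k + 1),
        p (M (js 0)) - p' (M (js 0)) ≤ p (M (js t)) - p' (M (js t)) := by
      intro t
      induction t using Fin.induction with
      | zero => exact le_refl _
      | succ t ih =>
        have e1 := hstep t
        have e2 : v (M (js t.castSucc)) (js t.succ) - p' (M (js t.castSucc))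
            ≤ profit v p' (js t.succ) := le_profit' v p' _ _
        have e3 : profit v p (js t.succ) = v (M (js t.succ)) (js t.succ) - p (M (js t.succ)) :=
          witness_profit' hM _
        have e4 := hterm (js t.succ)
        have e5 : v (M (js t.succ)) (js t.succ) - p' (M (js t.succ))
            ≤ profit v p' (js t.succ) := le_profit' v p' _ _
        linarith
    have hM0 : M (js 0) = i := by rw [hjs0]; exact M.apply_symm_apply i
    have hlast := mono (Fin.last k)
    have hnn := hp' (M (js (Fin.last k)))
    rw [hM0] at hlast
    linarith
  exact ⟨key, Finset.sum_le_sum fun i _ => key i⟩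

end
end

section
/- Let p be a buyer-optimal market clearing price vector with perfect matching M in the equality graph. Then every buyer j is joined by an M-alternating path in the equality graph, starting and ending with a matching edge, to some item i with p_i = 0. -/
open Finset

noncomputable section

/-- Auxiliary: buyers reachable from `j` by alternating paths. -/
inductive AuxReach {n : ℕ} (v : Fin n → Fin n → ℝ) (p : Fin n → ℝ) (M : Fin n ≃ Fin n)
    (j : Fin n) : Fin n → Prop
  | base : AuxReach v p M j j
  | step {j' j'' : Fin n} : AuxReach v p M j j' →
      p (M j') + profit v p j'' = v (M j') j'' → AuxReach v p M j j''

lemma auxReach_path {n : ℕ} {v : Fin n → Fin n → ℝ} {p : Fin n → ℝ} {M : Fin n ≃ Fin n}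
    {j j' : Fin n} (h : AuxReach v p M j j') :
    ∃ k : ℕ, ∃ js : Fin (k + 1) → Fin n,
      js 0 = j ∧ js (Fin.last k) = j' ∧
      (∀ t : Fin k,
        p (M (js t.castSucc)) + profit v p (js t.succ) = v (M (js t.castSucc)) (js t.succ)) := by
  induction h with
  | base =>
      exact ⟨0, fun _ => j, rfl, rfl, fun t => t.elim0⟩
  | @step j' j'' _ hedge ih =>
      obtain ⟨k, js, h0, hl, hstep⟩ := ih
      refine ⟨k + 1, Fin.snoc js j'', ?_, ?_, ?_⟩
      · have h00 : (0 : Fin (k + 2)) = (0 : Fin (k + 1)).castSucc := by ext; simp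
        rw [h00, Fin.snoc_castSucc, h0]
      · simp [Fin.snoc_last]
      · intro t
        induction t using Fin.lastCases with
        | last =>
            have h2 : (Fin.last k).succ = Fin.last (k + 1) := by ext; simp
            rw [h2, Fin.snoc_castSucc, Fin.snoc_last, hl]
            exact hedge
        | cast s =>
            rw [Fin.succ_castSucc, Fin.snoc_castSucc, Fin.snoc_castSucc]
            exact hstep s

lemma altPathZero_of_auxReach {n : ℕ} {v : Fin n → Fin n → ℝ} {p : Fin n → ℝ}
    {M : Fin n ≃ Fin n} {j j' : Fin n} (h : AuxReach v p M j j') (h0 : p (M j') = 0) :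
    AltPathZero v p M j := by
  obtain ⟨k, js, hj0, hl, hstep⟩ := auxReach_path h
  exact ⟨k, js, hj0, hstep, by rw [hl]; exact h0⟩

lemma profit_eq_of_witness {n : ℕ} {v : Fin n → Fin n → ℝ} {p : Fin n → ℝ}
    {M : Fin n ≃ Fin n} (hM : ClearingWitness v p M) (j : Fin n) :
    profit v p j = v (M j) j - p (M j) := by
  have : Nonempty (Fin n) := ⟨j⟩
  refine le_antisymm (ciSup_le fun i => hM j i) ?_
  exact le_ciSup (f := fun i => v i j - p i)
    (Set.Finite.bddAbove (Set.finite_range _)) (M j)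

/-- if `p` is buyer-optimal market clearing with witnessing matching `M`,
then every buyer is joined by an `M`-alternating path in the equality graph, starting
and ending with a matching edge, to a zero-priced item. -/
theorem stmt_8 (n : ℕ) (v : Fin n → Fin n → ℝ) (hv : ∀ i j, 0 ≤ v i j)
    (p : Fin n → ℝ) (hopt : BuyerOptimal v p)
    (M : Fin n ≃ Fin n) (hM : ClearingWitness v p M) :
    ∀ j, AltPathZero v p M j := by
  intro j
  by_contra hcon
  classical
  obtain ⟨hp0, _, hmin⟩ := hopt
  have hnz : ∀ j', AuxReach v p M j j' → p (M j') ≠ 0 := by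
    intro j' hr h0
    exact hcon (altPathZero_of_auxReach hr h0)
  set S : Finset (Fin n) := Finset.univ.filter (fun j' => AuxReach v p M j j') with hSdef
  have hmemS : ∀ j', j' ∈ S ↔ AuxReach v p M j j' := by
    intro j'; simp [hSdef]
  have hjS : j ∈ S := (hmemS j).2 AuxReach.base
  set T : Finset (Fin n) := S.image M with hTdef
  have hq : ∀ j', profit v p j' = v (M j') j' - p (M j') := profit_eq_of_witness hM
  have hpT : ∀ j' ∈ S, 0 < p (M j') := fun j' hj' =>
    lt_of_le_of_ne (hp0 _) (Ne.symm (hnz j' ((hmemS j').1 hj')))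
  have hslack : ∀ j₂ ∉ S, ∀ j' ∈ S, v (M j') j₂ - p (M j') < profit v p j₂ := by
    intro j₂ hj₂ j' hj'
    have : Nonempty (Fin n) := ⟨j⟩
    have hle : v (M j') j₂ - p (M j') ≤ profit v p j₂ :=
      le_ciSup (Set.Finite.bddAbove (Set.finite_range fun i => v i j₂ - p i)) (M j')
    rcases lt_or_eq_of_le hle with h | h
    · exact h
    · exact absurd ((hmemS j₂).2 (AuxReach.step ((hmemS j').1 hj') (by linarith))) hj₂
  -- define ε
  set A : Finset ℝ := S.image (fun j' => p (M j')) with hAdef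
  set B : Finset ℝ :=
    (S ×ˢ (Finset.univ \ S)).image
      (fun x : Fin n × Fin n => profit v p x.2 - (v (M x.1) x.2 - p (M x.1))) with hBdef
  have hne : (A ∪ B).Nonempty := ⟨p (M j), Finset.mem_union_left _ (Finset.mem_image_of_mem _ hjS)⟩
  set ε : ℝ := (A ∪ B).min' hne with hεdef
  have hεpos : 0 < ε := by
    have hmem := (A ∪ B).min'_mem hne
    rcases Finset.mem_union.1 hmem with h | h
    · obtain ⟨j', hj', he⟩ := Finset.mem_image.1 h
      rw [hεdef, ← he]; exact hpT j' hj'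
    · obtain ⟨x, hx, he⟩ := Finset.mem_image.1 h
      obtain ⟨hx1, hx2⟩ := Finset.mem_product.1 hx
      rw [hεdef, ← he]
      have := hslack x.2 (by simpa using (Finset.mem_sdiff.1 hx2).2) x.1 hx1
      linarith
  have hεA : ∀ j' ∈ S, ε ≤ p (M j') := fun j' hj' =>
    Finset.min'_le _ _ (Finset.mem_union_left _ (Finset.mem_image_of_mem _ hj'))
  have hεB : ∀ j₂ ∉ S, ∀ j' ∈ S, ε ≤ profit v p j₂ - (v (M j') j₂ - p (M j')) := by
    intro j₂ hj₂ j' hj'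
    refine Finset.min'_le _ _ (Finset.mem_union_right _ (Finset.mem_image.2 ⟨(j', j₂), ?_, rfl⟩))
    exact Finset.mem_product.2 ⟨hj', Finset.mem_sdiff.2 ⟨Finset.mem_univ _, hj₂⟩⟩
  -- the new prices
  set p' : Fin n → ℝ := fun i => if i ∈ T then p i - ε else p i with hp'def
  have hMT : ∀ j₂, M j₂ ∈ T ↔ j₂ ∈ S := by
    intro j₂
    simp [hTdef, M.injective.eq_iff]
  have hp'0 : ∀ i, 0 ≤ p' i := by
    intro i
    by_cases hi : i ∈ T
    · obtain ⟨j', hj', he⟩ := Finset.mem_image.1 hi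
      have h1 := hεA j' hj'
      simp only [hp'def, if_pos hi]
      rw [← he]; linarith
    · simp only [hp'def, if_neg hi]
      exact hp0 i
  have hcw : ClearingWitness v p' M := by
    intro j₂ i'
    by_cases hj₂ : j₂ ∈ S
    · have hMj₂ : M j₂ ∈ T := (hMT j₂).2 hj₂
      by_cases hi : i' ∈ T
      · simp only [hp'def, if_pos hi, if_pos hMj₂]
        have := hM j₂ i'
        linarith
      · simp only [hp'def, if_neg hi, if_pos hMj₂]
        have := hM j₂ i'
        linarith
    · have hMj₂ : M j₂ ∉ T := fun h => hj₂ ((hMT j₂).1 h)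
      by_cases hi : i' ∈ T
      · simp only [hp'def, if_pos hi, if_neg hMj₂]
        obtain ⟨j', hj', he⟩ := Finset.mem_image.1 hi
        have h1 := hεB j₂ hj₂ j' hj'
        have h2 := hq j₂
        rw [← he]
        linarith
      · simp only [hp'def, if_neg hi, if_neg hMj₂]
        exact hM j₂ i'
  -- sum decreases
  have hsum : ∑ i, p' i = (∑ i, p i) - T.card * ε := by
    have : ∀ i, p' i = p i - (if i ∈ T then ε else 0) := by
      intro i; by_cases hi : i ∈ T <;> simp [hp'def, hi]
    rw [Finset.sum_congr rfl fun i _ => this i, Finset.sum_sub_distrib]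
    congr 1
    rw [Finset.sum_ite_mem, Finset.univ_inter, Finset.sum_const, nsmul_eq_mul]
  have hTcard : 0 < (T.card : ℝ) := by
    have : M j ∈ T := (hMT j).2 hjS
    have := Finset.card_pos.2 ⟨M j, this⟩
    exact_mod_cast this
  have hlt : ∑ i, p' i < ∑ i, p i := by
    rw [hsum]
    nlinarith
  exact absurd (hmin p' hp'0 ⟨M, hcw⟩) (not_le.2 hlt)

end
end

section
/- Assigning items according to a maximum-value matching at buyer-optimal market clearing prices is incentive compatible: if buyer j truthfully reports valuations v(·,j) and receives item i at the buyer-optimal price p_i, while misreporting valuations ṽ(·,j) would yield item ĩ at price p̃_ĩ (buyer-optimal prices for the misreported market), then v(ĩ,j) - p̃_ĩ ≤ v(i,j) - p_i. -/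
open Finset

noncomputable section

/-!
With the VCG price, the true profit of buyer `j` when she receives item `i` is
`v i j + v*_{-j}^{-i} - v*_{-j}`, and neither `v*_{-j}` nor `v*_{-j}^{-i}` depends on her report.
Any item `i` together with a matching of the remaining items and buyers is a perfect matching,
so `v i j + v*_{-j}^{-i} ≤ v*`; for the item `M j` of a maximum-value matching `M` this is an
equality. Hence no report does better than the truthful one.
-/

namespace Equiv

variable {α β : Type*}

def subtypeNeEquiv (e : α ≃ β) {a : α} {b : β} (h : e a = b) :
    {x // x ≠ a} ≃ {y // y ≠ b} :=
  e.subtypeEquiv fun x => by rw [← h, e.injective.ne_iff]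

variable [DecidableEq α] [DecidableEq β]

def extendNe (a : α) (b : β) (N : {x // x ≠ a} ≃ {y // y ≠ b}) : α ≃ β :=
  (optionSubtypeNe a).symm.trans (N.optionCongr.trans (optionSubtypeNe b))

@[simp]
lemma extendNe_apply_self (a : α) (b : β) (N : {x // x ≠ a} ≃ {y // y ≠ b}) :
    extendNe a b N a = b := by
  simp [extendNe]

@[simp]
lemma extendNe_apply_of_ne {a : α} (b : β) (N : {x // x ≠ a} ≃ {y // y ≠ b}) {x : α}
    (h : x ≠ a) : extendNe a b N x = N ⟨x, h⟩ := by
  simp [extendNe, optionSubtypeNe_symm_of_ne h]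

end Equiv

section Matching

variable {n : ℕ}

lemma mval_eq_add_sum_ne (v : Fin n → Fin n → ℝ) (M : Fin n ≃ Fin n) (j : Fin n) :
    mval v M = v (M j) j + ∑ j' : {j' // j' ≠ j}, v (M j') j' :=
  Fintype.sum_eq_add_sum_subtype_ne _ j

lemma add_vstarRemove_le_vstar (v : Fin n → Fin n → ℝ) (i j : Fin n) :
    v i j + vstarRemove v i j ≤ vstar v := by
  have : Nonempty ({i' // i' ≠ i} ≃ {j' // j' ≠ j}) :=
    ⟨((Equiv.swap j i).subtypeNeEquiv (Equiv.swap_apply_left j i)).symm⟩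
  rw [← le_sub_iff_add_le']
  refine ciSup_le fun N => le_sub_iff_add_le'.mpr ?_
  calc v i j + ∑ j', v (N.symm j') j' = mval v (Equiv.extendNe j i N.symm) := by
        rw [mval_eq_add_sum_ne _ _ j, Equiv.extendNe_apply_self]
        congr! 3 with j'
        exact (Equiv.extendNe_apply_of_ne i N.symm j'.2).symm
    _ ≤ vstar v := le_ciSup (Finite.bddAbove_range _) _

lemma mval_le_add_vstarRemove (v : Fin n → Fin n → ℝ) (M : Fin n ≃ Fin n) (j : Fin n) :
    mval v M ≤ v (M j) j + vstarRemove v (M j) j := by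
  rw [mval_eq_add_sum_ne _ _ j]
  gcongr
  exact le_ciSup (f := fun N : {i' // i' ≠ M j} ≃ {j' // j' ≠ j} =>
    ∑ j', v (N.symm j') j') (Finite.bddAbove_range _) (M.subtypeNeEquiv rfl).symm

variable {v vt : Fin n → Fin n → ℝ} {j : Fin n}

lemma vstarDummy_congr (hsame : ∀ i, ∀ j' : Fin n, j' ≠ j → vt i j' = v i j') :
    vstarDummy vt j = vstarDummy v j := by
  unfold vstarDummy
  refine congrArg _ (funext fun M => Finset.sum_congr rfl fun j' hj' => ?_)
  exact hsame _ _ (Finset.ne_of_mem_erase hj')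

lemma vstarRemove_congr (hsame : ∀ i, ∀ j' : Fin n, j' ≠ j → vt i j' = v i j') (i : Fin n) :
    vstarRemove vt i j = vstarRemove v i j := by
  unfold vstarRemove
  refine congrArg _ (funext fun N => Finset.sum_congr rfl fun j' _ => ?_)
  exact hsame _ _ j'.2

end Matching

theorem stmt_14_general (n : ℕ) (v vt : Fin n → Fin n → ℝ)
    (j : Fin n) (hsame : ∀ i, ∀ j' : Fin n, j' ≠ j → vt i j' = v i j')
    (M Mt : Fin n ≃ Fin n) (hM : mval v M = vstar v) :
    v (Mt j) j - (vstarDummy vt j - vstarRemove vt (Mt j) j) ≤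
      v (M j) j - (vstarDummy v j - vstarRemove v (M j) j) := by
  rw [vstarDummy_congr hsame, vstarRemove_congr hsame]
  have hdeviate := add_vstarRemove_le_vstar v (Mt j) j
  have htruthful := hM ▸ mval_le_add_vstarRemove v M j
  linarith

/-- incentive compatibility of the VCG / buyer-optimal mechanism:
misreporting valuations cannot increase buyer `j`'s true profit. -/
theorem stmt_14 (n : ℕ) (v vt : Fin n → Fin n → ℝ)
    (hv : ∀ i j, 0 ≤ v i j) (hvt : ∀ i j, 0 ≤ vt i j)
    (j : Fin n) (hsame : ∀ i, ∀ j' : Fin n, j' ≠ j → vt i j' = v i j')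
    (M Mt : Fin n ≃ Fin n) (hM : mval v M = vstar v) (hMt : mval vt Mt = vstar vt) :
    v (Mt j) j - (vstarDummy vt j - vstarRemove vt (Mt j) j) ≤
      v (M j) j - (vstarDummy v j - vstarRemove v (M j) j) :=
  stmt_14_general n v vt j hsame M Mt hM

end
end

section
/- Let (p,q) be dual feasible, M ⊆ E^= a maximum but not perfect matching, j an unmatched buyer, R the set of items reachable from j by M-alternating paths in E^=, and M_R the set of matching partners of R. Then there is no equality edge between I \ R and M_R ∪ {j}; consequently, for δ := min{p_i + q_{j'} - v(i,j') : i ∈ I \ R, j' ∈ M_R ∪ {j}} > 0, raising p by δ on R and lowering q by δ on M_R ∪ {j} preserves dual feasibility and all equality edges incident to M. -/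
open Finset

noncomputable section

/-- there is no equality edge between `I \ R` and `M_R ∪ {j}`, and
raising prices by a suitable `δ > 0` on `R` while lowering profits by `δ` on
`M_R ∪ {j}` preserves dual feasibility and all equality edges of `Mset`. -/
theorem stmt_17 (n : ℕ) (v : Fin n → Fin n → ℝ) (hv : ∀ i j, 0 ≤ v i j)
    (p q : Fin n → ℝ) (hfeas : ∀ i j, v i j ≤ p i + q j)
    (Mset : Finset (Fin n × Fin n))
    (hMeq : InEqualityGraph v p q Mset) (hMmatch : IsMatching Mset)
    (hMmax : ∀ M' : Finset (Fin n × Fin n),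
      InEqualityGraph v p q M' → IsMatching M' → M'.card ≤ Mset.card)
    (j : Fin n) (hj : ∀ e ∈ Mset, e.2 ≠ j) :
    (∀ i : Fin n, ¬ ReachFrom v p q Mset j i →
      ∀ j' : Fin n,
        (j' = j ∨ ∃ i', ReachFrom v p q Mset j i' ∧ (i', j') ∈ Mset) →
        p i + q j' ≠ v i j') ∧
    ∃ δ : ℝ, 0 < δ ∧
      (∀ i : Fin n, ¬ ReachFrom v p q Mset j i →
        ∀ j' : Fin n,
          (j' = j ∨ ∃ i', ReachFrom v p q Mset j i' ∧ (i', j') ∈ Mset) →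
          δ ≤ p i + q j' - v i j') ∧
      ∀ p' q' : Fin n → ℝ,
        (∀ i, ReachFrom v p q Mset j i → p' i = p i + δ) →
        (∀ i, ¬ ReachFrom v p q Mset j i → p' i = p i) →
        (∀ j' : Fin n,
          (j' = j ∨ ∃ i', ReachFrom v p q Mset j i' ∧ (i', j') ∈ Mset) →
          q' j' = q j' - δ) →
        (∀ j' : Fin n,
          ¬ (j' = j ∨ ∃ i', ReachFrom v p q Mset j i' ∧ (i', j') ∈ Mset) →
          q' j' = q j') →
        (∀ i j', v i j' ≤ p' i + q' j') ∧ InEqualityGraph v p' q' Mset := by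
  classical
  -- Part 1: no equality edge between non-reachable items and M_R ∪ {j}.
  have key : ∀ i : Fin n, ¬ ReachFrom v p q Mset j i →
      ∀ j' : Fin n,
        (j' = j ∨ ∃ i', ReachFrom v p q Mset j i' ∧ (i', j') ∈ Mset) →
        p i + q j' ≠ v i j' := by
    intro i hi j' hj' heq
    apply hi
    rcases hj' with rfl | ⟨i', hi', hmem⟩
    · exact ⟨0, fun _ => i, fun _ => j', rfl, rfl,
        fun t => ⟨heq, fun h => hj _ h rfl⟩, fun t => t.elim0⟩
    · obtain ⟨k, is, js, h0, hlast, hne, hmat⟩ := hi'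
      have hii' : i ≠ i' := fun h => hi (h ▸ ⟨k, is, js, h0, hlast, hne, hmat⟩)
      have hnotin : (i, j') ∉ Mset := by
        intro hin
        have hne' : (i, j') ≠ (i', j') := fun h => hii' (congrArg Prod.fst h)
        exact (hMmatch _ hin _ hmem hne').2 rfl
      refine ⟨k + 1, Fin.snoc is i, Fin.snoc js j', ?_, ?_, ?_, ?_⟩
      · rw [show (0 : Fin (k + 2)) = Fin.castSucc 0 from Fin.castSucc_zero.symm, Fin.snoc_castSucc]
        exact h0
      · rw [Fin.snoc_last]
      · intro t
        refine Fin.lastCases ?_ ?_ t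
        · rw [Fin.snoc_last, Fin.snoc_last]
          exact ⟨heq, hnotin⟩
        · intro s
          rw [Fin.snoc_castSucc, Fin.snoc_castSucc]
          exact hne s
      · intro t
        refine Fin.lastCases ?_ ?_ t
        · rw [Fin.succ_last, Fin.snoc_last, Fin.snoc_castSucc, hlast]
          exact hmem
        · intro s
          rw [Fin.succ_castSucc, Fin.snoc_castSucc, Fin.snoc_castSucc]
          exact hmat s
  refine ⟨key, ?_⟩
  -- the set of "bad" pairs
  set S : Finset (Fin n × Fin n) :=
    Finset.univ.filter (fun e => ¬ ReachFrom v p q Mset j e.1 ∧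
      (e.2 = j ∨ ∃ i', ReachFrom v p q Mset j i' ∧ (i', e.2) ∈ Mset)) with hS
  have hmemS : ∀ e : Fin n × Fin n, e ∈ S ↔ (¬ ReachFrom v p q Mset j e.1 ∧
      (e.2 = j ∨ ∃ i', ReachFrom v p q Mset j i' ∧ (i', e.2) ∈ Mset)) := by
    intro e; simp [hS]
  set δ : ℝ := if h : S.Nonempty then S.inf' h (fun e => p e.1 + q e.2 - v e.1 e.2) else 1
    with hδ
  have hpos : ∀ e ∈ S, 0 < p e.1 + q e.2 - v e.1 e.2 := by
    intro e he
    obtain ⟨h1, h2⟩ := (hmemS e).1 he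
    have := hfeas e.1 e.2
    have := key e.1 h1 e.2 h2
    have : v e.1 e.2 < p e.1 + q e.2 := lt_of_le_of_ne ‹v e.1 e.2 ≤ _› (Ne.symm ‹_›)
    linarith
  have hδpos : 0 < δ := by
    rw [hδ]
    split_ifs with h
    · exact (Finset.lt_inf'_iff _).2 (fun e he => hpos e he)
    · norm_num
  have hbound : ∀ i : Fin n, ¬ ReachFrom v p q Mset j i →
      ∀ j' : Fin n,
        (j' = j ∨ ∃ i', ReachFrom v p q Mset j i' ∧ (i', j') ∈ Mset) →
        δ ≤ p i + q j' - v i j' := by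
    intro i hi j' hj'
    have hmem : (i, j') ∈ S := (hmemS (i, j')).2 ⟨hi, hj'⟩
    have hne : S.Nonempty := ⟨_, hmem⟩
    rw [hδ, dif_pos hne]
    exact Finset.inf'_le _ hmem
  refine ⟨δ, hδpos, hbound, ?_⟩
  intro p' q' h1 h2 h3 h4
  constructor
  · intro i j'
    by_cases hri : ReachFrom v p q Mset j i <;>
      by_cases hrj : (j' = j ∨ ∃ i', ReachFrom v p q Mset j i' ∧ (i', j') ∈ Mset)
    · rw [h1 i hri, h3 j' hrj]; have := hfeas i j'; linarith
    · rw [h1 i hri, h4 j' hrj]; have := hfeas i j'; linarith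
    · rw [h2 i hri, h3 j' hrj]; have := hbound i hri j' hrj; linarith
    · rw [h2 i hri, h4 j' hrj]; exact hfeas i j'
  · intro e he
    have heq := hMeq e he
    by_cases hri : ReachFrom v p q Mset j e.1
    · have hrj : (e.2 = j ∨ ∃ i', ReachFrom v p q Mset j i' ∧ (i', e.2) ∈ Mset) :=
        Or.inr ⟨e.1, hri, by rwa [Prod.mk.eta]⟩
      rw [h1 e.1 hri, h3 e.2 hrj]; linarith
    · have hrj : ¬ (e.2 = j ∨ ∃ i', ReachFrom v p q Mset j i' ∧ (i', e.2) ∈ Mset) := by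
        rintro (hej | ⟨i', hri', hmem⟩)
        · exact hj e he hej
        · have hne : e.1 ≠ i' := fun h => hri (h ▸ hri')
          have hne' : e ≠ (i', e.2) := by
            intro h; exact hne (by rw [h])
          exact (hMmatch e he _ hmem hne').2 rfl
      rw [h2 e.1 hri, h4 e.2 hrj]; exact heq

end
end

section
/- If p is buyer-optimal market clearing, then min_i p_i = 0 (assuming at least one item), i.e., some item has price zero. -/
open Finset

noncomputable section

/-- buyer-optimal market clearing prices have minimum price zero. -/
theorem stmt_18 (n : ℕ) (hn : 0 < n) (v : Fin n → Fin n → ℝ) (hv : ∀ i j, 0 ≤ v i j)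
    (p : Fin n → ℝ) (hopt : BuyerOptimal v p) :
    ∃ i, p i = 0 := by
  obtain ⟨hpos, ⟨M, hM⟩, hmin⟩ := hopt
  have hne : (Finset.univ : Finset (Fin n)).Nonempty := by
    simpa [Finset.univ_nonempty_iff] using Fin.pos_iff_nonempty.mp hn
  obtain ⟨i0, -, hi0⟩ := Finset.exists_min_image Finset.univ p hne
  refine ⟨i0, le_antisymm ?_ (hpos i0)⟩
  set c := p i0 with hc
  have h1 : ∑ i, p i ≤ ∑ i, (p i - c) := by
    refine hmin _ (fun i => by have := hi0 i (Finset.mem_univ i); linarith) ⟨M, ?_⟩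
    intro j i'
    have := hM j i'
    simp only
    linarith
  have h2 : ∑ i, (p i - c) = (∑ i, p i) - n * c := by
    rw [Finset.sum_sub_distrib]
    simp [mul_comm]
  have : (n : ℝ) * c ≤ 0 := by linarith
  have hn' : (0:ℝ) < n := by exact_mod_cast hn
  nlinarith

end
end
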